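/- arXiv:math/0201171 — 2 statements merged into one kernel-verified Lean document; each statement's English description precedes it below -/
import Mathlib

section
/- Let V be a finite-dimensional complex vector space of complex dimension at least 2, and let J : V → V be a real-linear map with J² = -I such that every one-dimensional complex linear subspace P of V satisfies J(P) = P. Then J = i·I or J = -i·I (multiplication by i or by -i). -/
theorem stmt2 (V : Type*) [AddCommGroup V] [Module ℂ V]
    [FiniteDimensional ℂ V] (h2 : 2 ≤ Module.finrank ℂ V)
    (J : V →ₗ[ℝ] V) (hJ2 : ∀ v, J (J v) = -v)
    (hJP : ∀ P : Submodule ℂ V, Module.finrank ℂ P = 1 →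
      ∀ v ∈ P, J v ∈ P) :
    (∀ v, J v = Complex.I • v) ∨ (∀ v, J v = -Complex.I • v) := by
  classical
  have key : ∀ v : V, v ≠ 0 → ∃ c : ℂ, J v = c • v := by
    intro v hv
    have h1 : Module.finrank ℂ (ℂ ∙ v) = 1 := finrank_span_singleton hv
    have hm := hJP (ℂ ∙ v) h1 v (Submodule.mem_span_singleton_self v)
    rcases Submodule.mem_span_singleton.mp hm with ⟨c, hcv⟩
    exact ⟨c, hcv.symm⟩
  -- if w is off the line of v, the scalars agree
  have step : ∀ v w : V, v ≠ 0 → w ∉ (ℂ ∙ v) → ∀ a b : ℂ,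
      J v = a • v → J w = b • w → a = b := by
    intro v w hv hw a b ha hb
    have hvw : v + w ≠ 0 := by
      intro h
      apply hw
      have hwv : w = (-1 : ℂ) • v := by
        rw [neg_smul, one_smul]
        exact eq_neg_of_add_eq_zero_right h
      exact hwv ▸ Submodule.smul_mem _ _ (Submodule.mem_span_singleton_self v)
    obtain ⟨d, hd⟩ := key (v + w) hvw
    have heq : a • v + b • w = d • v + d • w := by
      rw [← ha, ← hb, ← map_add, hd, smul_add]
    have h3 : (a - d) • v = (d - b) • w := by
      rw [sub_smul, sub_smul, sub_eq_sub_iff_add_eq_add, add_comm (d • w)]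
      exact heq
    by_cases hdb : d = b
    · subst hdb
      have : (a - d) • v = 0 := by rw [h3, sub_self, zero_smul]
      rcases smul_eq_zero.mp this with h | h
      · exact sub_eq_zero.mp h
      · exact absurd h hv
    · exfalso
      apply hw
      have hne : d - b ≠ 0 := sub_ne_zero.mpr hdb
      have : w = ((d - b)⁻¹ * (a - d)) • v := by
        rw [mul_smul, h3, inv_smul_smul₀ hne]
      exact this ▸ Submodule.smul_mem _ _ (Submodule.mem_span_singleton_self v)
  -- there is a vector off any line
  have exists_off : ∀ v : V, v ≠ 0 → ∃ u : V, u ∉ (ℂ ∙ v) := by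
    intro v hv
    by_contra hcon
    push_neg at hcon
    have htop : (ℂ ∙ v) = ⊤ := Submodule.eq_top_iff'.mpr hcon
    have : Module.finrank ℂ (ℂ ∙ v) = Module.finrank ℂ V := by
      rw [htop, finrank_top]
    rw [finrank_span_singleton hv] at this
    omega
  -- pick a base vector
  have hpos : 0 < Module.finrank ℂ V := by omega
  have : Nontrivial V := Module.nontrivial_of_finrank_pos hpos
  obtain ⟨v0, hv0⟩ := exists_ne (0 : V)
  obtain ⟨c0, hc0⟩ := key v0 hv0
  have hall : ∀ v : V, v ≠ 0 → J v = c0 • v := by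
    intro v hv
    obtain ⟨a, ha⟩ := key v hv
    suffices h : a = c0 by rw [ha, h]
    by_cases hvin : v ∈ (ℂ ∙ v0)
    · obtain ⟨u, hu⟩ := exists_off v0 hv0
      have hu0 : u ≠ 0 := fun h => hu (h ▸ (ℂ ∙ v0).zero_mem)
      obtain ⟨b, hb⟩ := key u hu0
      have e1 : c0 = b := step v0 u hv0 hu c0 b hc0 hb
      have hle : (ℂ ∙ v) ≤ (ℂ ∙ v0) := (Submodule.span_singleton_le_iff_mem v _).mpr hvin
      have hunv : u ∉ (ℂ ∙ v) := fun h => hu (hle h)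
      have e2 : a = b := step v u hv hunv a b ha hb
      rw [e2, ← e1]
    · exact ((step v0 v hv0 hvin c0 a hc0 ha)).symm
  -- c0 ≠ 0
  have hc0ne : c0 ≠ 0 := by
    intro h
    rw [h, zero_smul] at hc0
    have := hJ2 v0
    rw [hc0, map_zero] at this
    exact hv0 (by simpa using this.symm)
  -- c0 * c0 = -1
  have hc2 : c0 * c0 = -1 := by
    have hcv0 : c0 • v0 ≠ 0 := smul_ne_zero hc0ne hv0
    have h1 : J (J v0) = (c0 * c0) • v0 := by
      rw [hc0, hall (c0 • v0) hcv0, smul_smul]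
    have h2' : (c0 * c0) • v0 = (-1 : ℂ) • v0 := by
      rw [← h1, hJ2 v0, neg_smul, one_smul]
    exact smul_left_injective ℂ hv0 h2'
  have hfac : (c0 - Complex.I) * (c0 + Complex.I) = 0 := by
    linear_combination hc2 - Complex.I_mul_I
  have hfin : ∀ v : V, J v = c0 • v := by
    intro v
    by_cases hv : v = 0
    · simp [hv]
    · exact hall v hv
  rcases mul_eq_zero.mp hfac with h | h
  · left
    intro v
    rw [hfin v, sub_eq_zero.mp h]
  · right
    intro v
    rw [hfin v, eq_neg_of_add_eq_zero_left h]
end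

section
/- The map σ from the projectivized isotropic cone N = {ℂz : z ∈ ℂ³ \ {0}, ⟨z, z⟩ = 0} to the unit sphere S ⊂ ℝ³, induced by σ(x + iy) = ⟨x, x⟩⁻¹ (x ∧ y), is injective: if z, z' ∈ Ñ \ {0} satisfy σ(z) = σ(z'), then z' ∈ ℂ z. -/
open Matrix

open Complex in
lemma decompAux {R : Type*} [CommRing R] (a0 a1 a2 b0 b1 b2 w0 w1 w2 : R)
    (hab : a0*b0 + a1*b1 + a2*b2 = 0)
    (hE : b0^2 + b1^2 + b2^2 = a0^2 + a1^2 + a2^2) :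
    (a0^2+a1^2+a2^2)^2 * w0 =
      (w0*a0+w1*a1+w2*a2) * (a0^2+a1^2+a2^2) * a0
      + (w0*b0+w1*b1+w2*b2) * (a0^2+a1^2+a2^2) * b0
      + (w0*(a1*b2-a2*b1)+w1*(a2*b0-a0*b2)+w2*(a0*b1-a1*b0)) * (a1*b2-a2*b1) := by
  linear_combination ((w0*a0+w1*a1+w2*a2)*a0 - (a0^2+a1^2+a2^2)*w0) * hE
    - ((w0*b0+w1*b1+w2*b2)*a0 + (w0*a0+w1*a1+w2*a2)*b0 - (a0*b0+a1*b1+a2*b2)*w0) * hab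

/-- `σ(z) = ⟨x,x⟩⁻¹ (x ∧ y)` for `z = x + i y ∈ ℂ³`. -/
noncomputable def sigmaMap (z : Fin 3 → ℂ) : Fin 3 → ℝ :=
  (∑ i, (z i).re * (z i).re)⁻¹ •
    crossProduct (fun i => (z i).re) (fun i => (z i).im)

open Complex in
set_option maxHeartbeats 2000000 in
theorem stmt6 (z z' : Fin 3 → ℂ) (hz0 : z ≠ 0) (hz'0 : z' ≠ 0)
    (hiso : ∑ i, z i * z i = 0) (hiso' : ∑ i, z' i * z' i = 0)
    (hσ : sigmaMap z = sigmaMap z') :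
    ∃ c : ℂ, z' = c • z := by
  obtain ⟨x0, y0, hz0e⟩ : ∃ a b : ℝ, z 0 = a + b*I := ⟨_, _, (z 0).re_add_im.symm⟩
  obtain ⟨x1, y1, hz1e⟩ : ∃ a b : ℝ, z 1 = a + b*I := ⟨_, _, (z 1).re_add_im.symm⟩
  obtain ⟨x2, y2, hz2e⟩ : ∃ a b : ℝ, z 2 = a + b*I := ⟨_, _, (z 2).re_add_im.symm⟩
  obtain ⟨u0, v0, hw0e⟩ : ∃ a b : ℝ, z' 0 = a + b*I := ⟨_, _, (z' 0).re_add_im.symm⟩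
  obtain ⟨u1, v1, hw1e⟩ : ∃ a b : ℝ, z' 1 = a + b*I := ⟨_, _, (z' 1).re_add_im.symm⟩
  obtain ⟨u2, v2, hw2e⟩ : ∃ a b : ℝ, z' 2 = a + b*I := ⟨_, _, (z' 2).re_add_im.symm⟩
  rw [Fin.sum_univ_three, hz0e, hz1e, hz2e] at hiso
  rw [Fin.sum_univ_three, hw0e, hw1e, hw2e] at hiso'
  have hxy : x0*y0 + x1*y1 + x2*y2 = 0 := by
    have := congrArg Complex.im hiso
    simp at this; linarith
  have hEE : y0^2 + y1^2 + y2^2 = (x0^2+x1^2+x2^2) := by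
    have := congrArg Complex.re hiso
    simp at this; nlinarith [this]
  have huv : u0*v0 + u1*v1 + u2*v2 = 0 := by
    have := congrArg Complex.im hiso'
    simp at this; linarith
  have hEE' : v0^2 + v1^2 + v2^2 = (u0^2+u1^2+u2^2) := by
    have := congrArg Complex.re hiso'
    simp at this; nlinarith [this]
  have hE : 0 < (x0^2+x1^2+x2^2) := by
    rcases lt_or_ge 0 ((x0^2+x1^2+x2^2)) with h | h
    · exact h
    exfalso; apply hz0
    have h0 : x0 = 0 ∧ x1 = 0 ∧ x2 = 0 ∧ y0 = 0 ∧ y1 = 0 ∧ y2 = 0 := by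
      refine ⟨?_, ?_, ?_, ?_, ?_, ?_⟩ <;>
        nlinarith [sq_nonneg x0, sq_nonneg x1, sq_nonneg x2, sq_nonneg y0, sq_nonneg y1, sq_nonneg y2]
    obtain ⟨e0, e1, e2, e3, e4, e5⟩ := h0
    funext i; fin_cases i <;> simp [hz0e, hz1e, hz2e, e0, e1, e2, e3, e4, e5]
  have hE' : 0 < (u0^2+u1^2+u2^2) := by
    rcases lt_or_ge 0 ((u0^2+u1^2+u2^2)) with h | h
    · exact h
    exfalso; apply hz'0
    have h0 : u0 = 0 ∧ u1 = 0 ∧ u2 = 0 ∧ v0 = 0 ∧ v1 = 0 ∧ v2 = 0 := by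
      refine ⟨?_, ?_, ?_, ?_, ?_, ?_⟩ <;>
        nlinarith [sq_nonneg u0, sq_nonneg u1, sq_nonneg u2, sq_nonneg v0, sq_nonneg v1, sq_nonneg v2]
    obtain ⟨e0, e1, e2, e3, e4, e5⟩ := h0
    funext i; fin_cases i <;> simp [hw0e, hw1e, hw2e, e0, e1, e2, e3, e4, e5]
  have hEne : x0*x0 + x1*x1 + x2*x2 ≠ 0 := by nlinarith
  have hE'ne : u0*u0 + u1*u1 + u2*u2 ≠ 0 := by nlinarith
  have hc0 : (u1*v2-u2*v1)*(x0^2+x1^2+x2^2) = (u0^2+u1^2+u2^2)*(x1*y2-x2*y1) := by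
    have h := congrFun hσ 0
    simp [sigmaMap, crossProduct, Fin.sum_univ_three, hz0e, hz1e, hz2e, hw0e, hw1e, hw2e] at h
    field_simp [hEne, hE'ne] at h
    linear_combination -h
  have hc1 : (u2*v0-u0*v2)*(x0^2+x1^2+x2^2) = (u0^2+u1^2+u2^2)*(x2*y0-x0*y2) := by
    have h := congrFun hσ 1
    simp [sigmaMap, crossProduct, Fin.sum_univ_three, hz0e, hz1e, hz2e, hw0e, hw1e, hw2e] at h
    field_simp [hEne, hE'ne] at h
    linear_combination -h
  have hc2 : (u0*v1-u1*v0)*(x0^2+x1^2+x2^2) = (u0^2+u1^2+u2^2)*(x0*y1-x1*y0) := by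
    have h := congrFun hσ 2
    simp [sigmaMap, crossProduct, Fin.sum_univ_three, hz0e, hz1e, hz2e, hw0e, hw1e, hw2e] at h
    field_simp [hEne, hE'ne] at h
    linear_combination -h
  obtain ⟨P1, hP1⟩ : ∃ a : ℝ, a = u0*x0+u1*x1+u2*x2 := ⟨_, rfl⟩
  obtain ⟨Q1, hQ1⟩ : ∃ a : ℝ, a = u0*y0+u1*y1+u2*y2 := ⟨_, rfl⟩
  obtain ⟨G1, hG1⟩ : ∃ a : ℝ, a = u0*(x1*y2-x2*y1)+u1*(x2*y0-x0*y2)+u2*(x0*y1-x1*y0) := ⟨_, rfl⟩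
  obtain ⟨P2, hP2⟩ : ∃ a : ℝ, a = v0*x0+v1*x1+v2*x2 := ⟨_, rfl⟩
  obtain ⟨Q2, hQ2⟩ : ∃ a : ℝ, a = v0*y0+v1*y1+v2*y2 := ⟨_, rfl⟩
  obtain ⟨G2, hG2⟩ : ∃ a : ℝ, a = v0*(x1*y2-x2*y1)+v1*(x2*y0-x0*y2)+v2*(x0*y1-x1*y0) := ⟨_, rfl⟩
  obtain ⟨E, hEdef⟩ : ∃ a : ℝ, a = (x0^2+x1^2+x2^2) := ⟨_, rfl⟩
  obtain ⟨F, hFdef⟩ : ∃ a : ℝ, a = (u0^2+u1^2+u2^2) := ⟨_, rfl⟩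
  rw [← hEdef] at hEE hE hc0 hc1 hc2
  rw [← hFdef] at hEE' hE' hc0 hc1 hc2
  have hExne : E ≠ 0 := hE.ne'
  have hu0 : E^2 * u0 = P1*E*x0 + Q1*E*y0 + G1*(x1*y2-x2*y1) := by
    have h := decompAux x0 x1 x2 y0 y1 y2 u0 u1 u2 (by linear_combination hxy) (by linear_combination hEE + hEdef)
    rw [hEdef, hP1, hQ1, hG1]; linear_combination h
  have hv0 : E^2 * v0 = P2*E*x0 + Q2*E*y0 + G2*(x1*y2-x2*y1) := by
    have h := decompAux x0 x1 x2 y0 y1 y2 v0 v1 v2 (by linear_combination hxy) (by linear_combination hEE + hEdef)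
    rw [hEdef, hP2, hQ2, hG2]; linear_combination h
  have hu1 : E^2 * u1 = P1*E*x1 + Q1*E*y1 + G1*(x2*y0-x0*y2) := by
    have h := decompAux x1 x2 x0 y1 y2 y0 u1 u2 u0 (by linear_combination hxy) (by linear_combination hEE + hEdef)
    rw [hEdef, hP1, hQ1, hG1]; linear_combination h
  have hv1 : E^2 * v1 = P2*E*x1 + Q2*E*y1 + G2*(x2*y0-x0*y2) := by
    have h := decompAux x1 x2 x0 y1 y2 y0 v1 v2 v0 (by linear_combination hxy) (by linear_combination hEE + hEdef)
    rw [hEdef, hP2, hQ2, hG2]; linear_combination h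
  have hu2 : E^2 * u2 = P1*E*x2 + Q1*E*y2 + G1*(x0*y1-x1*y0) := by
    have h := decompAux x2 x0 x1 y2 y0 y1 u2 u0 u1 (by linear_combination hxy) (by linear_combination hEE + hEdef)
    rw [hEdef, hP1, hQ1, hG1]; linear_combination h
  have hv2 : E^2 * v2 = P2*E*x2 + Q2*E*y2 + G2*(x0*y1-x1*y0) := by
    have h := decompAux x2 x0 x1 y2 y0 y1 v2 v0 v1 (by linear_combination hxy) (by linear_combination hEE + hEdef)
    rw [hEdef, hP2, hQ2, hG2]; linear_combination h
  have hC0 : ((P1*E*x1 + Q1*E*y1 + G1*(x2*y0-x0*y2))*(P2*E*x2 + Q2*E*y2 + G2*(x0*y1-x1*y0)) - (P1*E*x2 + Q1*E*y2 + G1*(x0*y1-x1*y0))*(P2*E*x1 + Q2*E*y1 + G2*(x2*y0-x0*y2)))*E = E^4*(F*(x1*y2-x2*y1)) := by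
    linear_combination E^4*hc0 - E*((P2*E*x2 + Q2*E*y2 + G2*(x0*y1-x1*y0))*hu1 + E^2*u1*hv2 - (P2*E*x1 + Q2*E*y1 + G2*(x2*y0-x0*y2))*hu2 - E^2*u2*hv1)
  have hC1 : ((P1*E*x2 + Q1*E*y2 + G1*(x0*y1-x1*y0))*(P2*E*x0 + Q2*E*y0 + G2*(x1*y2-x2*y1)) - (P1*E*x0 + Q1*E*y0 + G1*(x1*y2-x2*y1))*(P2*E*x2 + Q2*E*y2 + G2*(x0*y1-x1*y0)))*E = E^4*(F*(x2*y0-x0*y2)) := by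
    linear_combination E^4*hc1 - E*((P2*E*x0 + Q2*E*y0 + G2*(x1*y2-x2*y1))*hu2 + E^2*u2*hv0 - (P2*E*x2 + Q2*E*y2 + G2*(x0*y1-x1*y0))*hu0 - E^2*u0*hv2)
  have hC2 : ((P1*E*x0 + Q1*E*y0 + G1*(x1*y2-x2*y1))*(P2*E*x1 + Q2*E*y1 + G2*(x2*y0-x0*y2)) - (P1*E*x1 + Q1*E*y1 + G1*(x2*y0-x0*y2))*(P2*E*x0 + Q2*E*y0 + G2*(x1*y2-x2*y1)))*E = E^4*(F*(x0*y1-x1*y0)) := by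
    linear_combination E^4*hc2 - E*((P2*E*x1 + Q2*E*y1 + G2*(x2*y0-x0*y2))*hu0 + E^2*u0*hv1 - (P2*E*x0 + Q2*E*y0 + G2*(x1*y2-x2*y1))*hu1 - E^2*u1*hv0)
  have hA1 : (Q1*G2 - Q2*G1) * E^4 = 0 := by
    linear_combination x0*hC0 + x1*hC1 + x2*hC2 + (Q1*G2 - Q2*G1)*E^2*((x0*y0+x1*y1+x2*y2)*hxy - E*hEE) + (Q1*G2-Q2*G1)*E^2*(y0^2+y1^2+y2^2)*hEdef
  have hA2 : (P1*G2 - P2*G1) * E^4 = 0 := by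
    linear_combination -(y0*hC0 + y1*hC1 + y2*hC2) + (P1*G2 - P2*G1)*E^2*((x0*y0+x1*y1+x2*y2)*hxy - E*hEE) + (P1*G2-P2*G1)*E^2*(y0^2+y1^2+y2^2)*hEdef
  have hA3 : (P1*Q2 - P2*Q1) * E^5 = F * E^6 := by
    linear_combination (x1*y2-x2*y1)*hC0 + (x2*y0-x0*y2)*hC1 + (x0*y1-x1*y0)*hC2 + ((P1*Q2 - P2*Q1)*E^3 - E^4*F)*((x0*y0+x1*y1+x2*y2)*hxy - E*hEE) + ((P1*Q2 - P2*Q1)*E^3 - E^4*F)*(y0^2+y1^2+y2^2)*hEdef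
  have hA1' : Q1*G2 - Q2*G1 = 0 := by
    rcases mul_eq_zero.mp hA1 with h | h
    · exact h
    · exact absurd h (pow_ne_zero 4 hExne)
  have hA2' : P1*G2 - P2*G1 = 0 := by
    rcases mul_eq_zero.mp hA2 with h | h
    · exact h
    · exact absurd h (pow_ne_zero 4 hExne)
  have hT : P1*Q2 - P2*Q1 = F * E := by
    have h5 : (E:ℝ)^5 ≠ 0 := pow_ne_zero 5 hExne
    have h := mul_right_cancel₀ h5 (show ((P1*Q2 - P2*Q1)) * E^5 = (F*E) * E^5 by linear_combination hA3)
    linarith [h]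
  have hTpos : 0 < P1*Q2 - P2*Q1 := by rw [hT]; exact mul_pos hE' hE
  have hUV : (P1*E*x0 + Q1*E*y0 + G1*(x1*y2-x2*y1))*(P2*E*x0 + Q2*E*y0 + G2*(x1*y2-x2*y1)) + (P1*E*x1 + Q1*E*y1 + G1*(x2*y0-x0*y2))*(P2*E*x1 + Q2*E*y1 + G2*(x2*y0-x0*y2)) + (P1*E*x2 + Q1*E*y2 + G1*(x0*y1-x1*y0))*(P2*E*x2 + Q2*E*y2 + G2*(x0*y1-x1*y0)) = 0 := by
    linear_combination E^4*huv - ((E^2*v0*hu0 + (P1*E*x0 + Q1*E*y0 + G1*(x1*y2-x2*y1))*hv0) + (E^2*v1*hu1 + (P1*E*x1 + Q1*E*y1 + G1*(x2*y0-x0*y2))*hv1) + (E^2*v2*hu2 + (P1*E*x2 + Q1*E*y2 + G1*(x0*y1-x1*y0))*hv2))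
  have hVU : ((P2*E*x0 + Q2*E*y0 + G2*(x1*y2-x2*y1))*(P2*E*x0 + Q2*E*y0 + G2*(x1*y2-x2*y1)) + (P2*E*x1 + Q2*E*y1 + G2*(x2*y0-x0*y2))*(P2*E*x1 + Q2*E*y1 + G2*(x2*y0-x0*y2)) + (P2*E*x2 + Q2*E*y2 + G2*(x0*y1-x1*y0))*(P2*E*x2 + Q2*E*y2 + G2*(x0*y1-x1*y0))) - ((P1*E*x0 + Q1*E*y0 + G1*(x1*y2-x2*y1))*(P1*E*x0 + Q1*E*y0 + G1*(x1*y2-x2*y1)) + (P1*E*x1 + Q1*E*y1 + G1*(x2*y0-x0*y2))*(P1*E*x1 + Q1*E*y1 + G1*(x2*y0-x0*y2)) + (P1*E*x2 + Q1*E*y2 + G1*(x0*y1-x1*y0))*(P1*E*x2 + Q1*E*y2 + G1*(x0*y1-x1*y0))) = 0 := by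
    linear_combination E^4*hEE' + E^4*hFdef - ((E^2*v0*hv0 + (P2*E*x0 + Q2*E*y0 + G2*(x1*y2-x2*y1))*hv0) + (E^2*v1*hv1 + (P2*E*x1 + Q2*E*y1 + G2*(x2*y0-x0*y2))*hv1) + (E^2*v2*hv2 + (P2*E*x2 + Q2*E*y2 + G2*(x0*y1-x1*y0))*hv2)) + ((E^2*u0*hu0 + (P1*E*x0 + Q1*E*y0 + G1*(x1*y2-x2*y1))*hu0) + (E^2*u1*hu1 + (P1*E*x1 + Q1*E*y1 + G1*(x2*y0-x0*y2))*hu1) + (E^2*u2*hu2 + (P1*E*x2 + Q1*E*y2 + G1*(x0*y1-x1*y0))*hu2))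
  have hI1 : (P1*P2 + Q1*Q2)*E^3 + G1*G2*E^2 = 0 := by
    linear_combination hUV - ((P1*Q2+P2*Q1)*E^2 - G1*G2*(x0*y0+x1*y1+x2*y2))*hxy - (Q1*Q2*E^2 + G1*G2*E)*hEE + (P1*P2*E^2 + G1*G2*(y0^2+y1^2+y2^2))*hEdef
  have hI2 : (P2^2 + Q2^2)*E^3 + G2^2*E^2 = (P1^2 + Q1^2)*E^3 + G1^2*E^2 := by
    linear_combination hVU - (2*(P2*Q2 - P1*Q1)*E^2 - (G2^2 - G1^2)*(x0*y0+x1*y1+x2*y2))*hxy - ((Q2^2 - Q1^2)*E^2 + (G2^2 - G1^2)*E)*hEE + ((G2^2-G1^2)*(y0^2+y1^2+y2^2) - (P1^2-P2^2)*E^2)*hEdef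
  have hG10 : G1 = 0 := by
    have h : (P1*Q2 - P2*Q1) * G1 = 0 := by linear_combination Q1*hA2' - P1*hA1'
    rcases mul_eq_zero.mp h with h' | h'
    · exact absurd h' hTpos.ne'
    · exact h'
  have hG20 : G2 = 0 := by
    have h : (P1*Q2 - P2*Q1) * G2 = 0 := by linear_combination Q2*hA2' - P2*hA1'
    rcases mul_eq_zero.mp h with h' | h'
    · exact absurd h' hTpos.ne'
    · exact h'
  have hO : P1*P2 + Q1*Q2 = 0 := by
    have h3 : (E:ℝ)^3 ≠ 0 := pow_ne_zero 3 hExne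
    rw [hG10] at hI1
    have h' : (P1*P2 + Q1*Q2)*E^3 = 0 := by linear_combination hI1
    rcases mul_eq_zero.mp h' with h'' | h''
    · exact h''
    · exact absurd h'' h3
  have hN : P2^2 + Q2^2 = P1^2 + Q1^2 := by
    have h3 : (E:ℝ)^3 ≠ 0 := pow_ne_zero 3 hExne
    rw [hG10, hG20] at hI2
    have h' : (P2^2 + Q2^2 - (P1^2 + Q1^2))*E^3 = 0 := by linear_combination hI2
    rcases mul_eq_zero.mp h' with h'' | h''
    · linarith [h'']
    · exact absurd h'' h3
  have key : (P1*Q2 - P2*Q1)^2 + (P1*P2 + Q1*Q2)^2 = (P1^2+Q1^2)*(P2^2+Q2^2) := by ring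
  have hDX : (P1*Q2 - P2*Q1)^2 = (P1^2+Q1^2)^2 := by
    linear_combination key + (P1^2+Q1^2)*hN - (P1*P2+Q1*Q2)*hO
  have hDeq : P1*Q2 - P2*Q1 = P1^2+Q1^2 := by
    have hfac : ((P1*Q2 - P2*Q1) - (P1^2+Q1^2)) * ((P1*Q2 - P2*Q1) + (P1^2+Q1^2)) = 0 := by
      linear_combination hDX
    rcases mul_eq_zero.mp hfac with h | h
    · linarith [h]
    · exfalso; linarith [h, hTpos, sq_nonneg P1, sq_nonneg Q1]
  have hsum : (P2+Q1)^2 + (Q2-P1)^2 = 0 := by linear_combination hN - 2*hDeq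
  have hP2e : P2 = -Q1 := by
    have h1 : (P2+Q1)^2 = 0 := by linarith [hsum, sq_nonneg (Q2-P1), sq_nonneg (P2+Q1)]
    have := pow_eq_zero_iff (n := 2) (by norm_num) |>.mp h1
    linarith [this]
  have hQ2e : Q2 = P1 := by
    have h1 : (Q2-P1)^2 = 0 := by linarith [hsum, sq_nonneg (Q2-P1), sq_nonneg (P2+Q1)]
    have := pow_eq_zero_iff (n := 2) (by norm_num) |>.mp h1
    linarith [this]
  have hru0 : E * u0 = P1*x0 + Q1*y0 := by
    have h := hu0; rw [hG10] at h
    exact mul_left_cancel₀ hExne (by linear_combination h)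
  have hrv0 : E * v0 = -Q1*x0 + P1*y0 := by
    have h := hv0; rw [hG20, hP2e, hQ2e] at h
    exact mul_left_cancel₀ hExne (by linear_combination h)
  have hru0C := congrArg (Complex.ofReal) hru0
  have hrv0C := congrArg (Complex.ofReal) hrv0
  have hru1 : E * u1 = P1*x1 + Q1*y1 := by
    have h := hu1; rw [hG10] at h
    exact mul_left_cancel₀ hExne (by linear_combination h)
  have hrv1 : E * v1 = -Q1*x1 + P1*y1 := by
    have h := hv1; rw [hG20, hP2e, hQ2e] at h
    exact mul_left_cancel₀ hExne (by linear_combination h)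
  have hru1C := congrArg (Complex.ofReal) hru1
  have hrv1C := congrArg (Complex.ofReal) hrv1
  have hru2 : E * u2 = P1*x2 + Q1*y2 := by
    have h := hu2; rw [hG10] at h
    exact mul_left_cancel₀ hExne (by linear_combination h)
  have hrv2 : E * v2 = -Q1*x2 + P1*y2 := by
    have h := hv2; rw [hG20, hP2e, hQ2e] at h
    exact mul_left_cancel₀ hExne (by linear_combination h)
  have hru2C := congrArg (Complex.ofReal) hru2
  have hrv2C := congrArg (Complex.ofReal) hrv2
  push_cast at hru0C hrv0C hru1C hrv1C hru2C hrv2C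
  have hECne : ((E:ℝ):ℂ) ≠ 0 := by exact_mod_cast hExne
  refine ⟨((P1:ℝ) - (Q1:ℝ)*I)/((E:ℝ):ℂ), ?_⟩
  funext i
  fin_cases i <;> simp only [Pi.smul_apply, smul_eq_mul, Fin.isValue]
  · show z' 0 = _ * z 0
    rw [hw0e, hz0e, div_mul_eq_mul_div, eq_div_iff hECne]
    linear_combination hru0C + I*hrv0C + ((Q1:ℝ):ℂ)*((y0:ℝ):ℂ)*Complex.I_sq
  · show z' 1 = _ * z 1
    rw [hw1e, hz1e, div_mul_eq_mul_div, eq_div_iff hECne]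
    linear_combination hru1C + I*hrv1C + ((Q1:ℝ):ℂ)*((y1:ℝ):ℂ)*Complex.I_sq
  · show z' 2 = _ * z 2
    rw [hw2e, hz2e, div_mul_eq_mul_div, eq_div_iff hECne]
    linear_combination hru2C + I*hrv2C + ((Q1:ℝ):ℂ)*((y2:ℝ):ℂ)*Complex.I_sq
end
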